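/- arXiv:1801.10048 — 6 statements merged into one kernel-verified Lean document; each statement's English description precedes it below -/
import Mathlib

section
/- Let f(ζ) = ζ² + (μ + a)ζ + aμ(1 - (Nβλ/(dμ)) e^{-ζτ}) for real ζ, with τ ≥ 0 and positive parameters. If Nβλ - dμ > 0, then f(0) < 0 and f(ζ) → +∞ as ζ → +∞, hence by continuity f has a positive real root. -/
theorem f_has_pos_root (a mu d beta lam N tau : ℝ)
    (ha : 0 < a) (hmu : 0 < mu) (hd : 0 < d) (hbeta : 0 < beta)
    (hlam : 0 < lam) (hN : 0 < N) (htau : 0 ≤ tau)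
    (hpos : N * beta * lam - d * mu > 0) :
    let f : ℝ → ℝ := fun z =>
      z ^ 2 + (mu + a) * z + a * mu * (1 - (N * beta * lam / (d * mu)) * Real.exp (-z * tau))
    f 0 < 0 ∧ Filter.Tendsto f Filter.atTop Filter.atTop ∧ ∃ z : ℝ, 0 < z ∧ f z = 0 := by
  intro f
  have hdmu : 0 < d * mu := mul_pos hd hmu
  have hR : 1 < N * beta * lam / (d * mu) := by
    rw [lt_div_iff₀ hdmu]; linarith
  have hf0 : f 0 < 0 := by
    have : f 0 = a * mu * (1 - N * beta * lam / (d * mu)) := by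
      simp [f]
    rw [this]
    have := mul_pos ha hmu
    nlinarith
  have hcont : Continuous f := by
    apply Continuous.add
    · fun_prop
    · apply Continuous.mul continuous_const
      apply Continuous.sub continuous_const
      apply Continuous.mul continuous_const
      exact Real.continuous_exp.comp (by fun_prop)
  have htend : Filter.Tendsto f Filter.atTop Filter.atTop := by
    have hlow : Filter.Tendsto (fun z : ℝ =>
        z ^ 2 + (mu + a) * z + a * mu * (1 - N * beta * lam / (d * mu)))
        Filter.atTop Filter.atTop := by
      apply Filter.tendsto_atTop_add_const_right
      apply Filter.Tendsto.atTop_add_atTop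
      · exact Filter.tendsto_pow_atTop (by norm_num)
      · exact Filter.Tendsto.const_mul_atTop (by linarith) Filter.tendsto_id
    apply Filter.tendsto_atTop_mono' _ _ hlow
    filter_upwards [Filter.eventually_ge_atTop (0:ℝ)] with z hz
    have hexp : Real.exp (-z * tau) ≤ 1 := by
      rw [Real.exp_le_one_iff]
      nlinarith
    have hRpos : 0 < N * beta * lam / (d * mu) := by linarith
    have : (N * beta * lam / (d * mu)) * Real.exp (-z * tau) ≤ N * beta * lam / (d * mu) := by
      nlinarith
    have hamu : 0 < a * mu := mul_pos ha hmu
    simp only [f]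
    nlinarith
  refine ⟨hf0, htend, ?_⟩
  obtain ⟨b, hb0, hb⟩ := ((Filter.eventually_ge_atTop (0:ℝ)).and
    (htend.eventually (Filter.eventually_ge_atTop (1:ℝ)))).exists
  have h0mem : (0:ℝ) ∈ Set.Icc (f 0) (f b) := ⟨hf0.le, by linarith⟩
  obtain ⟨z, hzmem, hfz⟩ := intermediate_value_Icc hb0 hcont.continuousOn h0mem
  refine ⟨z, ?_, hfz⟩
  rcases hzmem.1.lt_or_eq with h | h
  · exact h
  · exfalso; rw [← h] at hfz; linarith
end

section
/- Suppose ω > 0 and the purely imaginary number iω satisfies -ω² + (μ + a)iω + aμ(1 - (Nβλ/(dμ))e^{-iωτ}) = 0, with τ ≥ 0 and all parameters positive. Then ω⁴ + (a² + μ²)ω² + a²μ²(1 - (Nβλ/(dμ))²) = 0. -/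
/-! On the imaginary axis the delay term `e^{-iωτ}` has modulus one, so the characteristic equation
says that `aμ - ω² + i(μ + a)ω` has modulus `aμ · Nβλ/(dμ)`. Squaring this modulus identity gives the
quartic in `ω`. -/

open Complex

theorem sq_add_sq_eq_sq_of_eq_mul_exp_mul_I {x y c θ : ℝ}
    (h : (x + y * I : ℂ) = c * exp (θ * I)) : x ^ 2 + y ^ 2 = c ^ 2 := by
  have hnorm := congrArg normSq h
  rw [normSq_add_mul_I, normSq_mul, normSq_ofReal, normSq_eq_norm_sq, norm_exp_ofReal_mul_I]
    at hnorm
  linear_combination hnorm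

theorem imaginary_root_implies_general (a mu d beta lam N tau omega : ℝ)
    (heq : -(↑omega : ℂ) ^ 2 + (↑(mu + a) : ℂ) * (Complex.I * ↑omega) +
      (↑(a * mu) : ℂ) * (1 - (↑(N * beta * lam / (d * mu)) : ℂ) *
        Complex.exp (-(Complex.I * ↑omega) * ↑tau)) = 0) :
    omega ^ 4 + (a ^ 2 + mu ^ 2) * omega ^ 2 +
      a ^ 2 * mu ^ 2 * (1 - (N * beta * lam / (d * mu)) ^ 2) = 0 := by
  set R := N * beta * lam / (d * mu)
  have hmod : ((a * mu - omega ^ 2 : ℝ) + ((mu + a) * omega : ℝ) * I : ℂ) =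
      (a * mu * R : ℝ) * exp ((-(omega * tau) : ℝ) * I) := by
    have hphase : -(I * omega) * tau = (-(omega * tau) : ℝ) * I := by push_cast; ring
    rw [hphase] at heq
    push_cast at heq ⊢
    linear_combination heq
  linear_combination sq_add_sq_eq_sq_of_eq_mul_exp_mul_I hmod

theorem imaginary_root_implies (a mu d beta lam N tau omega : ℝ)
    (ha : 0 < a) (hmu : 0 < mu) (hd : 0 < d) (hbeta : 0 < beta)
    (hlam : 0 < lam) (hN : 0 < N) (htau : 0 ≤ tau) (homega : 0 < omega)
    (heq : -(↑omega : ℂ) ^ 2 + (↑(mu + a) : ℂ) * (Complex.I * ↑omega) +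
      (↑(a * mu) : ℂ) * (1 - (↑(N * beta * lam / (d * mu)) : ℂ) *
        Complex.exp (-(Complex.I * ↑omega) * ↑tau)) = 0) :
    omega ^ 4 + (a ^ 2 + mu ^ 2) * omega ^ 2 +
      a ^ 2 * mu ^ 2 * (1 - (N * beta * lam / (d * mu)) ^ 2) = 0 :=
  imaginary_root_implies_general a mu d beta lam N tau omega heq
end

section
/- If Nβλ - dμ < 0 with all parameters positive and τ ≥ 0, then no purely imaginary number ζ = iω with ω > 0 satisfies ζ² + (μ + a)ζ + aμ(1 - (Nβλ/(dμ)) e^{-ζτ}) = 0. -/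
/-! Writing the equation as `(ζ + a)(ζ + μ) = aμR e^{-ζτ}` with `R = Nβλ/(dμ) ∈ (0, 1)`, on the
closed right half-plane the left side has modulus at least `aμ`, while the right side has modulus
at most `aμR < aμ`. -/

open Complex

theorem le_norm_add_ofReal {z : ℂ} (hz : 0 ≤ z.re) (a : ℝ) : a ≤ ‖z + a‖ :=
  calc a ≤ (z + a).re := by simp only [add_re, ofReal_re]; linarith
    _ ≤ ‖z + a‖ := re_le_norm _

theorem norm_exp_neg_mul_ofReal_le_one {z : ℂ} (hz : 0 ≤ z.re) {τ : ℝ} (hτ : 0 ≤ τ) :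
    ‖exp (-z * τ)‖ ≤ 1 := by
  rw [norm_exp, Real.exp_le_one_iff]
  simpa using mul_nonneg hz hτ

theorem delay_char_ne_zero_of_re_nonneg {a μ r τ : ℝ} (ha : 0 < a) (hμ : 0 < μ) (hr : |r| < 1)
    (hτ : 0 ≤ τ) {ζ : ℂ} (hζ : 0 ≤ ζ.re) :
    ζ ^ 2 + ((μ + a : ℝ) : ℂ) * ζ + ((a * μ : ℝ) : ℂ) * (1 - (r : ℂ) * exp (-ζ * τ)) ≠ 0 := by
  intro h
  have hfactor : (ζ + a) * (ζ + μ) = (a * μ * r : ℝ) * exp (-ζ * τ) := by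
    push_cast at h ⊢
    linear_combination h
  have hlower : a * μ ≤ ‖(ζ + a) * (ζ + μ)‖ := by
    rw [norm_mul]
    exact mul_le_mul (le_norm_add_ofReal hζ a) (le_norm_add_ofReal hζ μ) hμ.le
      (norm_nonneg _)
  have hupper : ‖((a * μ * r : ℝ) : ℂ) * exp (-ζ * τ)‖ < a * μ := by
    rw [norm_mul, norm_real, Real.norm_eq_abs, abs_mul, abs_of_pos (mul_pos ha hμ)]
    calc a * μ * |r| * ‖exp (-ζ * τ)‖ ≤ a * μ * |r| :=
          mul_le_of_le_one_right (by positivity) (norm_exp_neg_mul_ofReal_le_one hζ hτ)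
      _ < a * μ := mul_lt_of_lt_one_right (mul_pos ha hμ) hr
  exact (hlower.trans_lt (hfactor ▸ hupper)).false

theorem no_pure_imaginary_root (a mu d beta lam N tau : ℝ)
    (ha : 0 < a) (hmu : 0 < mu) (hd : 0 < d) (hbeta : 0 < beta)
    (hlam : 0 < lam) (hN : 0 < N) (htau : 0 ≤ tau)
    (hneg : N * beta * lam - d * mu < 0) :
    ¬ ∃ omega : ℝ, 0 < omega ∧
      (Complex.I * ↑omega) ^ 2 + (↑(mu + a) : ℂ) * (Complex.I * ↑omega) +
        (↑(a * mu) : ℂ) * (1 - (↑(N * beta * lam / (d * mu)) : ℂ) *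
          Complex.exp (-(Complex.I * ↑omega) * ↑tau)) = 0 := by
  rintro ⟨ω, -, hroot⟩
  have hR : |N * beta * lam / (d * mu)| < 1 := by
    rw [abs_of_pos (by positivity), div_lt_one (by positivity)]
    linarith
  exact delay_char_ne_zero_of_re_nonneg ha hmu hR htau (by simp) hroot
end

section
/- Let F : ℝ⁴ → ℝ⁴ be the right-hand side of the delayed HIV system evaluated with nonnegative history. If x, y, v, z : [0, T) → ℝ are continuously differentiable, satisfy the delayed system with nonnegative initial history on [-τ, 0], then x(t), y(t), v(t), z(t) ≥ 0 for all t in [0, T). (Positivity via the integral representation: e.g. x(t) = e^{-∫₀ᵗ (d + βv(ξ))dξ}(x(0) + ∫₀ᵗ λ e^{∫₀^η (d + βv(ξ))dξ} dη) ≥ 0.) -/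
open Set Filter Real Topology



lemma eps_le_zero {cc E : ℝ} (hE : 0 < E) (h : ∀ ε > 0, cc ≤ ε * E) : cc ≤ 0 := by
  by_contra hcc
  push_neg at hcc
  have h1 := h (cc / (2 * E)) (by positivity)
  have h2 : cc / (2 * E) * E = cc / 2 := by field_simp
  rw [h2] at h1
  linarith

/-- Pair comparison lemma: two functions with a quasi-monotone coupling stay ≤ 0. -/
lemma pair_nonpos {f₁ f₂ g₁ g₂ : ℝ → ℝ} {a b K : ℝ} (hK : 0 ≤ K)
    (hd1 : ∀ t ∈ Ico a b, HasDerivAt f₁ (g₁ t) t)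
    (hd2 : ∀ t ∈ Ico a b, HasDerivAt f₂ (g₂ t) t)
    (hc1 : ContinuousOn f₁ (Icc a b)) (hc2 : ContinuousOn f₂ (Icc a b))
    (ha1 : f₁ a ≤ 0) (ha2 : f₂ a ≤ 0)
    (hb1 : ∀ t ∈ Ico a b, 0 < f₁ t → f₂ t ≤ f₁ t → g₁ t ≤ K * f₁ t)
    (hb2 : ∀ t ∈ Ico a b, 0 < f₂ t → f₁ t ≤ f₂ t → g₂ t ≤ K * f₂ t) :
    ∀ t ∈ Icc a b, f₁ t ≤ 0 ∧ f₂ t ≤ 0 := by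
  set f : ℝ → ℝ := fun t => max (f₁ t) (f₂ t) with hf_def
  set f' : ℝ → ℝ := fun t =>
    if f₂ t < f₁ t then g₁ t else if f₁ t < f₂ t then g₂ t else max (g₁ t) (g₂ t) with hf'_def
  have hfc : ContinuousOn f (Icc a b) := hc1.sup hc2
  -- slope condition for the max function
  have hslope : ∀ t ∈ Ico a b, ∀ r, f' t < r → ∃ᶠ zz in 𝓝[>] t, slope f t zz < r := by
    intro t ht r hr
    have hne : (𝓝[>] t).NeBot := nhdsGT_neBot t
    have hmono : 𝓝[>] t ≤ 𝓝[≠] t :=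
      nhdsWithin_mono t (fun u hu => ne_of_gt hu)
    have ht1 : Tendsto (slope f₁ t) (𝓝[>] t) (𝓝 (g₁ t)) :=
      (hasDerivAt_iff_tendsto_slope.mp (hd1 t ht)).mono_left hmono
    have ht2 : Tendsto (slope f₂ t) (𝓝[>] t) (𝓝 (g₂ t)) :=
      (hasDerivAt_iff_tendsto_slope.mp (hd2 t ht)).mono_left hmono
    rcases lt_trichotomy (f₁ t) (f₂ t) with hlt | heq | hgt
    · -- f' t = g₂ t
      have hf't : f' t = g₂ t := by
        simp only [hf'_def]
        rw [if_neg (by linarith), if_pos hlt]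
      rw [hf't] at hr
      have hev1 : ∀ᶠ zz in 𝓝[>] t, slope f₂ t zz < r := ht2.eventually_lt_const hr
      -- eventually f₁ zz < f₂ zz near t
      have hcont : ContinuousAt (fun u => f₂ u - f₁ u) t :=
        ((hd2 t ht).continuousAt.sub (hd1 t ht).continuousAt)
      have hev2 : ∀ᶠ zz in 𝓝 t, 0 < f₂ zz - f₁ zz :=
        continuousAt_const.eventually_lt hcont (by linarith)
      have hev2' : ∀ᶠ zz in 𝓝[>] t, 0 < f₂ zz - f₁ zz := hev2.filter_mono nhdsWithin_le_nhds
      refine ((hev1.and hev2').mono ?_).frequently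
      rintro zz ⟨h1, h2⟩
      have hfz : f zz = f₂ zz := max_eq_right (by linarith)
      have hft : f t = f₂ t := max_eq_right (le_of_lt hlt)
      calc slope f t zz = slope f₂ t zz := by rw [slope, slope, hfz, hft]
        _ < r := h1
    · -- tie: f' t = max g₁ g₂
      have hf't : f' t = max (g₁ t) (g₂ t) := by
        simp only [hf'_def]
        rw [if_neg (by linarith), if_neg (by linarith)]
      rw [hf't, max_lt_iff] at hr
      have hev1 : ∀ᶠ zz in 𝓝[>] t, slope f₁ t zz < r := ht1.eventually_lt_const hr.1
      have hev2 : ∀ᶠ zz in 𝓝[>] t, slope f₂ t zz < r := ht2.eventually_lt_const hr.2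
      refine ((hev1.and hev2).mono ?_).frequently
      rintro zz ⟨h1, h2⟩
      rcases le_total (f₁ zz) (f₂ zz) with hcs | hcs
      · have hfz : f zz = f₂ zz := max_eq_right hcs
        have hft : f t = f₂ t := max_eq_right (le_of_eq heq)
        calc slope f t zz = slope f₂ t zz := by rw [slope, slope, hfz, hft]
          _ < r := h2
      · have hfz : f zz = f₁ zz := max_eq_left hcs
        have hft : f t = f₁ t := max_eq_left (le_of_eq heq.symm)
        calc slope f t zz = slope f₁ t zz := by rw [slope, slope, hfz, hft]
          _ < r := h1
    · -- f' t = g₁ t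
      have hf't : f' t = g₁ t := by
        simp only [hf'_def]
        rw [if_pos hgt]
      rw [hf't] at hr
      have hev1 : ∀ᶠ zz in 𝓝[>] t, slope f₁ t zz < r := ht1.eventually_lt_const hr
      have hcont : ContinuousAt (fun u => f₁ u - f₂ u) t :=
        ((hd1 t ht).continuousAt.sub (hd2 t ht).continuousAt)
      have hev2 : ∀ᶠ zz in 𝓝 t, 0 < f₁ zz - f₂ zz :=
        continuousAt_const.eventually_lt hcont (by linarith)
      have hev2' : ∀ᶠ zz in 𝓝[>] t, 0 < f₁ zz - f₂ zz := hev2.filter_mono nhdsWithin_le_nhds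
      refine ((hev1.and hev2').mono ?_).frequently
      rintro zz ⟨h1, h2⟩
      have hfz : f zz = f₁ zz := max_eq_left (by linarith)
      have hft : f t = f₁ t := max_eq_left (le_of_lt hgt)
      calc slope f t zz = slope f₁ t zz := by rw [slope, slope, hfz, hft]
        _ < r := h1
  -- key: for every ε > 0, f t ≤ ε * exp ((K+1)*(t-a)) on [a, b]
  have key : ∀ ε > 0, ∀ t ∈ Icc a b, f t ≤ ε * Real.exp ((K + 1) * (t - a)) := by
    intro ε hε
    set B : ℝ → ℝ := fun t => ε * Real.exp ((K + 1) * (t - a)) with hB_def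
    set B' : ℝ → ℝ := fun t => ε * (Real.exp ((K + 1) * (t - a)) * (K + 1)) with hB'_def
    have hB : ∀ t : ℝ, HasDerivAt B (B' t) t := by
      intro t
      have h1 : HasDerivAt (fun t : ℝ => (K + 1) * (t - a)) (K + 1) t := by
        simpa using (((hasDerivAt_id t).sub_const a).const_mul (K + 1))
      exact (h1.exp).const_mul ε
    have hBpos : ∀ t : ℝ, 0 < B t := fun t => mul_pos hε (Real.exp_pos _)
    have hfa : f a ≤ B a := le_trans (max_le ha1 ha2) (le_of_lt (hBpos a))
    have bound : ∀ t ∈ Ico a b, f t = B t → f' t < B' t := by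
      intro t ht hfB
      have hfpos : 0 < f t := hfB ▸ hBpos t
      have hKB : K * f t < B' t := by
        rw [hfB]
        simp only [hB_def, hB'_def]
        have hE := Real.exp_pos ((K + 1) * (t - a))
        nlinarith
      rcases lt_trichotomy (f₁ t) (f₂ t) with hlt | heq | hgt
      · have hf't : f' t = g₂ t := by
          simp only [hf'_def]; rw [if_neg (by linarith), if_pos hlt]
        have hft : f t = f₂ t := max_eq_right (le_of_lt hlt)
        have := hb2 t ht (hft ▸ hfpos) (le_of_lt hlt)
        rw [hf't]; rw [hft] at hKB; linarith
      · have hf't : f' t = max (g₁ t) (g₂ t) := by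
          simp only [hf'_def]; rw [if_neg (by linarith), if_neg (by linarith)]
        have hft : f t = f₁ t := by simp [hf_def, heq]
        have h1 := hb1 t ht (hft ▸ hfpos) (le_of_eq heq.symm)
        have h2 := hb2 t ht (by rw [hft, heq] at hfpos; exact hfpos) (le_of_eq heq)
        rw [hf't, max_lt_iff]
        constructor
        · rw [hft] at hKB; linarith
        · rw [hft, heq] at hKB; linarith
      · have hf't : f' t = g₁ t := by simp only [hf'_def]; rw [if_pos hgt]
        have hft : f t = f₁ t := max_eq_left (le_of_lt hgt)
        have := hb1 t ht (hft ▸ hfpos) (le_of_lt hgt)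
        rw [hf't]; rw [hft] at hKB; linarith
    exact fun t ht => image_le_of_liminf_slope_right_lt_deriv_boundary hfc hslope hfa hB bound ht
  intro t ht
  have hf0 : f t ≤ 0 :=
    eps_le_zero (Real.exp_pos ((K + 1) * (t - a))) (fun ε hε => key ε hε t ht)
  exact ⟨le_trans (le_max_left _ _) hf0, le_trans (le_max_right _ _) hf0⟩

set_option maxHeartbeats 1000000 in
theorem delayed_system_positivity
    (lam d beta a p N mu c h tau T : ℝ)
    (hlam : 0 < lam) (hd : 0 < d) (hbeta : 0 < beta) (ha : 0 < a)
    (hp : 0 < p) (hN : 0 < N) (hmu : 0 < mu) (hc : 0 < c) (hh : 0 < h)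
    (htau : 0 ≤ tau) (hT : 0 < T)
    (x y v z : ℝ → ℝ)
    (hist : ∀ t ∈ Set.Icc (-tau) 0, 0 ≤ x t ∧ 0 ≤ y t ∧ 0 ≤ v t ∧ 0 ≤ z t)
    (hcont : ContinuousOn x (Set.Icc (-tau) T) ∧ ContinuousOn y (Set.Icc (-tau) T) ∧
      ContinuousOn v (Set.Icc (-tau) T) ∧ ContinuousOn z (Set.Icc (-tau) T))
    (hode : ∀ t ∈ Set.Ico (0:ℝ) T,
      HasDerivAt x (lam - d * x t - beta * x t * v t) t ∧
      HasDerivAt y (beta * x (t - tau) * v (t - tau) - a * y t - p * y t * z t) t ∧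
      HasDerivAt v (a * N * y t - mu * v t) t ∧
      HasDerivAt z (c * x t * y t * z t - h * z t) t) :
    ∀ t ∈ Set.Ico (0:ℝ) T, 0 ≤ x t ∧ 0 ≤ y t ∧ 0 ≤ v t ∧ 0 ≤ z t := by
  obtain ⟨hcx, hcy, hcv, hcz⟩ := hcont
  intro t0 ht0
  obtain ⟨ht00, ht0T⟩ := ht0
  have hsub : Icc (0:ℝ) t0 ⊆ Icc (-tau) T := Icc_subset_Icc (by linarith) (le_of_lt ht0T)
  have hsubT : Icc (-tau) t0 ⊆ Icc (-tau) T := Icc_subset_Icc le_rfl (le_of_lt ht0T)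
  have hsub' : Ico (0:ℝ) t0 ⊆ Ico 0 T := Ico_subset_Ico le_rfl (le_of_lt ht0T)
  have hist0 := hist 0 ⟨by linarith, le_rfl⟩
  -- Step 1 : x ≥ 0 on Icc 0 t0
  obtain ⟨Cv0, hCv0⟩ := isCompact_Icc.exists_bound_of_continuousOn
    (f := fun t => d + beta * v t) (s := Icc (0:ℝ) t0)
    (continuousOn_const.add (continuousOn_const.mul (hcv.mono hsub)))
  obtain ⟨Cv, hCvn, hCv⟩ : ∃ Cv : ℝ, 0 ≤ Cv ∧ ∀ s ∈ Icc (0:ℝ) t0, |d + beta * v s| ≤ Cv :=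
    ⟨max Cv0 0, le_max_right _ _, fun s hs => le_trans (by simpa using hCv0 s hs) (le_max_left _ _)⟩
  have hx0 : ∀ t ∈ Icc (0:ℝ) t0, 0 ≤ x t := by
    have hbound : ∀ t ∈ Ico (0:ℝ) t0, 0 < -x t → -x t ≤ -x t →
        -(lam - d * x t - beta * x t * v t) ≤ Cv * (-x t) := by
      intro t ht hpos _
      obtain ⟨hb1, hb2⟩ := abs_le.mp (hCv t (Ico_subset_Icc_self ht))
      have hKge : -(d + beta * v t) ≤ Cv := by linarith
      have hmul := mul_le_mul_of_nonneg_right hKge (le_of_lt hpos)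
      nlinarith
    have hres := pair_nonpos (f₁ := fun t => -x t) (f₂ := fun t => -x t)
      (g₁ := fun t => -(lam - d * x t - beta * x t * v t))
      (g₂ := fun t => -(lam - d * x t - beta * x t * v t))
      (a := (0:ℝ)) (b := t0) (K := Cv) hCvn
      (fun t ht => ((hode t (hsub' ht)).1).neg)
      (fun t ht => ((hode t (hsub' ht)).1).neg)
      ((hcx.mono hsub).neg) ((hcx.mono hsub).neg)
      (by simpa using hist0.1) (by simpa using hist0.1)
      hbound hbound
    intro t ht
    have h1 : -x t ≤ 0 := (hres t ht).1
    linarith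
  -- Step 2 : z ≥ 0 on Icc 0 t0
  obtain ⟨Cz0, hCz0⟩ := isCompact_Icc.exists_bound_of_continuousOn
    (f := fun t => h - c * x t * y t) (s := Icc (0:ℝ) t0)
    (continuousOn_const.sub ((continuousOn_const.mul (hcx.mono hsub)).mul (hcy.mono hsub)))
  obtain ⟨Cz, hCzn, hCz⟩ : ∃ Cz : ℝ, 0 ≤ Cz ∧ ∀ s ∈ Icc (0:ℝ) t0, |h - c * x s * y s| ≤ Cz :=
    ⟨max Cz0 0, le_max_right _ _, fun s hs => le_trans (by simpa using hCz0 s hs) (le_max_left _ _)⟩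
  have hz0 : ∀ t ∈ Icc (0:ℝ) t0, 0 ≤ z t := by
    have hbound : ∀ t ∈ Ico (0:ℝ) t0, 0 < -z t → -z t ≤ -z t →
        -(c * x t * y t * z t - h * z t) ≤ Cz * (-z t) := by
      intro t ht hpos _
      obtain ⟨hb1, hb2⟩ := abs_le.mp (hCz t (Ico_subset_Icc_self ht))
      have hKge : h - c * x t * y t ≤ Cz := by linarith
      have hmul := mul_le_mul_of_nonneg_right hKge (le_of_lt hpos)
      nlinarith
    have hres := pair_nonpos (f₁ := fun t => -z t) (f₂ := fun t => -z t)
      (g₁ := fun t => -(c * x t * y t * z t - h * z t))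
      (g₂ := fun t => -(c * x t * y t * z t - h * z t))
      (a := (0:ℝ)) (b := t0) (K := Cz) hCzn
      (fun t ht => ((hode t (hsub' ht)).2.2.2).neg)
      (fun t ht => ((hode t (hsub' ht)).2.2.2).neg)
      ((hcz.mono hsub).neg) ((hcz.mono hsub).neg)
      (by simpa using hist0.2.2.2) (by simpa using hist0.2.2.2)
      hbound hbound
    intro t ht
    have h1 : -z t ≤ 0 := (hres t ht).1
    linarith
  -- Step 3 : y, v ≥ 0 on Icc 0 t0
  obtain ⟨Cx0, hCx0⟩ := isCompact_Icc.exists_bound_of_continuousOn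
    (f := x) (s := Icc (-tau) t0) (hcx.mono hsubT)
  obtain ⟨Cx, hCxn, hCxb⟩ : ∃ Cx : ℝ, 0 ≤ Cx ∧ ∀ s ∈ Icc (-tau) t0, x s ≤ Cx :=
    ⟨max Cx0 0, le_max_right _ _, fun s hs =>
      le_trans (le_of_abs_le (by simpa using hCx0 s hs)) (le_max_left _ _)⟩
  obtain ⟨Cg0, hCg0⟩ := isCompact_Icc.exists_bound_of_continuousOn
    (f := fun t => a + p * z t) (s := Icc (0:ℝ) t0)
    (continuousOn_const.add (continuousOn_const.mul (hcz.mono hsub)))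
  obtain ⟨Cg, hCgn, hCgb⟩ : ∃ Cg : ℝ, 0 ≤ Cg ∧ ∀ s ∈ Icc (0:ℝ) t0, |a + p * z s| ≤ Cg :=
    ⟨max Cg0 0, le_max_right _ _, fun s hs => le_trans (by simpa using hCg0 s hs) (le_max_left _ _)⟩
  obtain ⟨K, hK, hKge1, hKge2⟩ : ∃ K : ℝ, 0 ≤ K ∧ beta * Cx + Cg ≤ K ∧ a * N ≤ K :=
    ⟨beta * Cx + Cg + a * N, by positivity, by nlinarith, by nlinarith⟩
  have hyv : ∀ s ∈ Icc (0:ℝ) t0, 0 ≤ y s ∧ 0 ≤ v s := by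
    by_contra hbad
    push_neg at hbad
    set Bs : Set ℝ := {s | s ∈ Icc (0:ℝ) t0 ∧ min (y s) (v s) < 0} with hBs_def
    have hBne : Bs.Nonempty := by
      obtain ⟨s, hs, hsbad⟩ := hbad
      refine ⟨s, hs, ?_⟩
      rcases le_or_gt 0 (y s) with hys | hys
      · exact lt_of_le_of_lt (min_le_right _ _) (hsbad hys)
      · exact lt_of_le_of_lt (min_le_left _ _) hys
    have hbdd : BddBelow Bs := ⟨0, fun s hs => hs.1.1⟩
    have hts0 : 0 ≤ sInf Bs := le_csInf hBne (fun s hs => hs.1.1)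
    set ts : ℝ := sInf Bs with hts_def
    have htst0 : ts ≤ t0 := by
      obtain ⟨s, hs⟩ := hBne
      exact le_trans (csInf_le hbdd hs) hs.1.2
    have hpre : ∀ s, 0 ≤ s → s < ts → 0 ≤ y s ∧ 0 ≤ v s := by
      intro s hs0 hsts
      by_contra hmin
      have hsB : s ∈ Bs := by
        refine ⟨⟨hs0, by linarith⟩, ?_⟩
        by_contra hge
        push_neg at hge
        rw [le_min_iff] at hge
        exact hmin ⟨hge.1, hge.2⟩
      exact absurd (csInf_le hbdd hsB) (by linarith)
    have hat : 0 ≤ y ts ∧ 0 ≤ v ts := by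
      rcases eq_or_lt_of_le hts0 with hts0' | hts0'
      · have h0 := hist 0 ⟨by linarith, le_rfl⟩
        rw [← hts0']
        exact ⟨h0.2.1, h0.2.2.1⟩
      · have hcl : ts ∈ closure (Ico (0:ℝ) ts) := by
          rw [closure_Ico (ne_of_lt hts0')]
          exact ⟨hts0, le_rfl⟩
        have hne : (𝓝[Ico (0:ℝ) ts] ts).NeBot := mem_closure_iff_nhdsWithin_neBot.mp hcl
        have hmemT : ts ∈ Icc (-tau) T := ⟨by linarith, by linarith⟩
        have hsubts : Ico (0:ℝ) ts ⊆ Icc (-tau) T :=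
          fun u hu => ⟨by linarith [hu.1], by linarith [hu.2]⟩
        have hty : Tendsto y (𝓝[Ico (0:ℝ) ts] ts) (𝓝 (y ts)) :=
          ((hcy ts hmemT).mono hsubts).tendsto
        have htv : Tendsto v (𝓝[Ico (0:ℝ) ts] ts) (𝓝 (v ts)) :=
          ((hcv ts hmemT).mono hsubts).tendsto
        have hevy : ∀ᶠ s in 𝓝[Ico (0:ℝ) ts] ts, 0 ≤ y s :=
          eventually_mem_nhdsWithin.mono (fun s hs => (hpre s hs.1 hs.2).1)
        have hevv : ∀ᶠ s in 𝓝[Ico (0:ℝ) ts] ts, 0 ≤ v s :=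
          eventually_mem_nhdsWithin.mono (fun s hs => (hpre s hs.1 hs.2).2)
        exact ⟨ge_of_tendsto hty hevy, ge_of_tendsto htv hevv⟩
    have htslt : ts < t0 := by
      rcases eq_or_lt_of_le htst0 with heq | hlt
      · exfalso
        obtain ⟨s, hs⟩ := hBne
        have hse : s = ts := le_antisymm (heq ▸ hs.1.2) (csInf_le hbdd hs)
        rw [hse] at hs
        have hmin : (0:ℝ) ≤ min (y ts) (v ts) := le_min hat.1 hat.2
        linarith [hs.2]
      · exact hlt
    -- the interval on which we extend nonnegativity
    obtain ⟨b', hb'gt, hb'le, hb'tau⟩ :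
        ∃ b' : ℝ, ts < b' ∧ b' ≤ t0 ∧ (tau ≠ 0 → b' ≤ ts + tau) := by
      rcases eq_or_lt_of_le htau with htau0 | htau0
      · exact ⟨t0, htslt, le_rfl, fun hne => absurd htau0.symm hne⟩
      · exact ⟨min (ts + tau) t0, lt_min (by linarith) htslt, min_le_right _ _,
          fun _ => min_le_left _ _⟩
    have hsubIco : Ico ts b' ⊆ Ico (0:ℝ) T :=
      fun u hu => ⟨le_trans hts0 hu.1, by linarith [hu.2]⟩
    have hsubIcc : Icc ts b' ⊆ Icc (-tau) T :=
      fun u hu => ⟨by linarith [hu.1], by linarith [hu.2]⟩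
    have hdel : ∀ t ∈ Ico ts b', 0 ≤ x (t - tau) := by
      intro t ht
      rcases le_or_gt (t - tau) 0 with hc' | hc'
      · exact (hist (t - tau) ⟨by linarith [hts0, ht.1], hc'⟩).1
      · exact hx0 (t - tau) ⟨le_of_lt hc', by linarith [ht.2]⟩
    have hbound1 : ∀ t ∈ Ico ts b', 0 < -y t → -v t ≤ -y t →
        -(beta * x (t - tau) * v (t - tau) - a * y t - p * y t * z t) ≤ K * (-y t) := by
      intro t ht hpos hle
      have hxb : x (t - tau) ≤ Cx :=
        hCxb (t - tau) ⟨by linarith [hts0, ht.1], by linarith [ht.2, htau]⟩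
      have hxnn : 0 ≤ x (t - tau) := hdel t ht
      obtain ⟨hg1, hg2⟩ := abs_le.mp (hCgb t ⟨le_trans hts0 ht.1, by linarith [ht.2]⟩)
      have hterm1 : -(beta * x (t - tau) * v (t - tau)) ≤ beta * Cx * (-y t) := by
        by_cases htau0 : tau = 0
        · subst htau0
          rw [sub_zero] at hxb hxnn ⊢
          have e1 : beta * x t * (-v t) ≤ beta * x t * (-y t) :=
            mul_le_mul_of_nonneg_left hle (by positivity)
          have e2 : beta * x t * (-y t) ≤ beta * Cx * (-y t) :=
            mul_le_mul_of_nonneg_right (mul_le_mul_of_nonneg_left hxb hbeta.le) hpos.le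
          nlinarith [e1, e2]
        · have hvdel : 0 ≤ v (t - tau) := by
            rcases le_or_gt (t - tau) 0 with hc' | hc'
            · exact (hist (t - tau) ⟨by linarith [hts0, ht.1], hc'⟩).2.2.1
            · have httau : 0 < tau := lt_of_le_of_ne htau (Ne.symm htau0)
              have hlt' : t - tau < ts := by
                have := hb'tau htau0
                linarith [ht.2]
              exact (hpre (t - tau) (le_of_lt hc') hlt').2
          nlinarith [mul_nonneg (mul_nonneg hbeta.le hxnn) hvdel,
            mul_nonneg (mul_nonneg hbeta.le hCxn) hpos.le]
      have hterm2 : (a + p * z t) * y t ≤ Cg * (-y t) := by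
        have hre : (a + p * z t) * y t = -(a + p * z t) * (-y t) := by ring
        rw [hre]
        exact mul_le_mul_of_nonneg_right (by linarith) (le_of_lt hpos)
      have hKmul : (beta * Cx + Cg) * (-y t) ≤ K * (-y t) :=
        mul_le_mul_of_nonneg_right hKge1 (le_of_lt hpos)
      nlinarith
    have hbound2 : ∀ t ∈ Ico ts b', 0 < -v t → -y t ≤ -v t →
        -(a * N * y t - mu * v t) ≤ K * (-v t) := by
      intro t ht hpos hle
      have h1 : a * N * (-y t) ≤ a * N * (-v t) :=
        mul_le_mul_of_nonneg_left hle (by positivity)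
      have h3 : a * N * (-v t) ≤ K * (-v t) :=
        mul_le_mul_of_nonneg_right hKge2 (le_of_lt hpos)
      nlinarith
    have hres := pair_nonpos (f₁ := fun t => -y t) (f₂ := fun t => -v t)
      (g₁ := fun t => -(beta * x (t - tau) * v (t - tau) - a * y t - p * y t * z t))
      (g₂ := fun t => -(a * N * y t - mu * v t))
      (a := ts) (b := b') (K := K) hK
      (fun t ht => ((hode t (hsubIco ht)).2.1).neg)
      (fun t ht => ((hode t (hsubIco ht)).2.2.1).neg)
      ((hcy.mono hsubIcc).neg) ((hcv.mono hsubIcc).neg)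
      (by simpa using hat.1) (by simpa using hat.2)
      hbound1 hbound2
    -- contradiction: some bad point lies in [ts, b']
    have hex : ∃ s ∈ Bs, s < b' := by
      by_contra hno
      push_neg at hno
      have : b' ≤ ts := le_csInf hBne hno
      linarith
    obtain ⟨s, hsB, hsb'⟩ := hex
    have hsts : ts ≤ s := csInf_le hbdd hsB
    have hry : -y s ≤ 0 := (hres s ⟨hsts, le_of_lt hsb'⟩).1
    have hrv : -v s ≤ 0 := (hres s ⟨hsts, le_of_lt hsb'⟩).2
    have hmin : (0:ℝ) ≤ min (y s) (v s) := le_min (by linarith) (by linarith)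
    linarith [hsB.2]
  exact ⟨hx0 t0 ⟨ht00, le_rfl⟩, (hyv t0 ⟨ht00, le_rfl⟩).1, (hyv t0 ⟨ht00, le_rfl⟩).2,
    hz0 t0 ⟨ht00, le_rfl⟩⟩
end

section
/- Let F(t) = aN x(t) + aN y(t+τ) + (a/2) v(t+τ), where (x, y, v, z) solves the delayed HIV system with nonnegative components. Then F'(t) ≤ λaN - ϱ F(t) where ϱ = min(d, a/2, μ); consequently, by Gronwall's inequality, F(t) ≤ max(F(0), λaN/ϱ) for all t ≥ 0, so x, y, v are bounded. -/
/-!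
Weighting the equations as `aN x' + aN y'(· + τ) + (a/2) v'(· + τ)` cancels the infection term
`β x v` between the `x`- and the delayed `y`-equation (the shift by `τ` is what makes the two
terms meet), the sink `-p y z` only helps, and half of the `y`-death rate pays for the production
of virions. What remains is the linear differential inequality `F' ≤ λaN - ϱ F`, and Grönwall's
inequality with rate `-ϱ` keeps `F` below the larger of its initial value and the equilibrium
level `λaN/ϱ`.
-/

theorem gronwallBound_neg_le_max {δ ρ A s : ℝ} (hρ : 0 < ρ) (hs : 0 ≤ s) :
    gronwallBound δ (-ρ) A s ≤ max δ (A / ρ) := by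
  rw [gronwallBound_of_K_ne_0 (neg_ne_zero.2 hρ.ne')]
  set e := Real.exp (-ρ * s)
  have he₁ : e ≤ 1 := Real.exp_le_one_iff.2 (by nlinarith)
  calc δ * e + A / -ρ * (e - 1) = δ * e + A / ρ * (1 - e) := by rw [div_neg]; ring
    _ ≤ max δ (A / ρ) * e + max δ (A / ρ) * (1 - e) := by
        gcongr
        exacts [le_max_left _ _, le_max_right _ _]
    _ = max δ (A / ρ) := by ring

theorem le_max_of_hasDerivAt_le_sub_mul {f f' : ℝ → ℝ} {A ρ a : ℝ} (hρ : 0 < ρ)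
    (hf : ∀ t, a ≤ t → HasDerivAt f (f' t) t) (bound : ∀ t, a ≤ t → f' t ≤ A - ρ * f t)
    {t : ℝ} (ht : a ≤ t) : f t ≤ max (f a) (A / ρ) := by
  have hgronwall := le_gronwallBound_of_liminf_deriv_right_le (f' := f') (δ := f a) (K := -ρ)
    (ε := A) (b := t)
    (fun s hs => (hf s hs.1).continuousAt.continuousWithinAt)
    (fun s hs _ hr => (hf s hs.1).hasDerivWithinAt.liminf_right_slope_le hr) le_rfl
    (fun s hs => by linarith [bound s hs.1]) t ⟨ht, le_rfl⟩
  exact hgronwall.trans (gronwallBound_neg_le_max hρ (sub_nonneg.2 ht))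

theorem lyapunov_rate_le {lam d a p N mu rho x y v z i : ℝ} (ha : 0 ≤ a) (hp : 0 ≤ p)
    (hN : 0 ≤ N) (hrd : rho ≤ d) (hra : rho ≤ a / 2) (hrm : rho ≤ mu)
    (hx : 0 ≤ x) (hy : 0 ≤ y) (hv : 0 ≤ v) (hz : 0 ≤ z) :
    a * N * (lam - d * x - i) + a * N * (i - a * y - p * y * z)
        + a / 2 * (a * N * y - mu * v)
      ≤ lam * a * N - rho * (a * N * x + a * N * y + a / 2 * v) := by
  have haN : 0 ≤ a * N := mul_nonneg ha hN
  nlinarith [mul_nonneg (mul_nonneg (sub_nonneg.2 hrd) haN) hx,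
    mul_nonneg (mul_nonneg (sub_nonneg.2 hra) haN) hy,
    mul_nonneg (mul_nonneg (sub_nonneg.2 hrm) (div_nonneg ha zero_le_two)) hv,
    mul_nonneg (mul_nonneg (mul_nonneg haN hp) hy) hz]

theorem F_bounded_general (lam d beta a p N mu c h tau : ℝ)
    (hd : 0 < d) (ha : 0 < a)
    (hp : 0 < p) (hN : 0 < N) (hmu : 0 < mu)
    (htau : 0 ≤ tau)
    (x y v z : ℝ → ℝ)
    (hnonneg : ∀ t, -tau ≤ t → 0 ≤ x t ∧ 0 ≤ y t ∧ 0 ≤ v t ∧ 0 ≤ z t)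
    (hode : ∀ t, (0:ℝ) ≤ t →
      HasDerivAt x (lam - d * x t - beta * x t * v t) t ∧
      HasDerivAt y (beta * x (t - tau) * v (t - tau) - a * y t - p * y t * z t) t ∧
      HasDerivAt v (a * N * y t - mu * v t) t ∧
      HasDerivAt z (c * x t * y t * z t - h * z t) t) :
    let F : ℝ → ℝ := fun t => a * N * x t + a * N * y (t + tau) + (a / 2) * v (t + tau)
    let rho := min d (min (a / 2) mu)
    (∀ t, (0:ℝ) ≤ t → deriv F t ≤ lam * a * N - rho * F t) ∧
    (∀ t, (0:ℝ) ≤ t → F t ≤ max (F 0) (lam * a * N / rho)) := by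
  intro F rho
  have hrho : 0 < rho := lt_min hd (lt_min (half_pos ha) hmu)
  let F' : ℝ → ℝ := fun t => a * N * (lam - d * x t - beta * x t * v t)
    + a * N * (beta * x t * v t - a * y (t + tau) - p * y (t + tau) * z (t + tau))
    + a / 2 * (a * N * y (t + tau) - mu * v (t + tau))
  have hF : ∀ t, 0 ≤ t → HasDerivAt F (F' t) t := fun t ht => by
    obtain ⟨hx, -, -, -⟩ := hode t ht
    obtain ⟨-, hy, hv, -⟩ := hode (t + tau) (by linarith)
    rw [add_sub_cancel_right] at hy
    exact ((hx.const_mul _).add ((hy.comp_add_const t tau).const_mul _)).add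
      ((hv.comp_add_const t tau).const_mul _)
  have hF' : ∀ t, 0 ≤ t → F' t ≤ lam * a * N - rho * F t := fun t ht => by
    obtain ⟨hx, -, -, -⟩ := hnonneg t (by linarith)
    obtain ⟨-, hy, hv, hz⟩ := hnonneg (t + tau) (by linarith)
    exact lyapunov_rate_le ha.le hp.le hN.le (min_le_left _ _)
      ((min_le_right _ _).trans (min_le_left _ _)) ((min_le_right _ _).trans (min_le_right _ _))
      hx hy hv hz
  exact ⟨fun t ht => (hF t ht).deriv ▸ hF' t ht,
    fun t ht => le_max_of_hasDerivAt_le_sub_mul hrho hF hF' ht⟩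

theorem F_bounded (lam d beta a p N mu c h tau : ℝ)
    (hlam : 0 < lam) (hd : 0 < d) (hbeta : 0 < beta) (ha : 0 < a)
    (hp : 0 < p) (hN : 0 < N) (hmu : 0 < mu) (hc : 0 < c) (hh : 0 < h)
    (htau : 0 ≤ tau)
    (x y v z : ℝ → ℝ)
    (hnonneg : ∀ t, -tau ≤ t → 0 ≤ x t ∧ 0 ≤ y t ∧ 0 ≤ v t ∧ 0 ≤ z t)
    (hode : ∀ t, (0:ℝ) ≤ t →
      HasDerivAt x (lam - d * x t - beta * x t * v t) t ∧
      HasDerivAt y (beta * x (t - tau) * v (t - tau) - a * y t - p * y t * z t) t ∧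
      HasDerivAt v (a * N * y t - mu * v t) t ∧
      HasDerivAt z (c * x t * y t * z t - h * z t) t) :
    let F : ℝ → ℝ := fun t => a * N * x t + a * N * y (t + tau) + (a / 2) * v (t + tau)
    let rho := min d (min (a / 2) mu)
    (∀ t, (0:ℝ) ≤ t → deriv F t ≤ lam * a * N - rho * F t) ∧
    (∀ t, (0:ℝ) ≤ t → F t ≤ max (F 0) (lam * a * N / rho)) :=
  F_bounded_general lam d beta a p N mu c h tau hd ha hp hN hmu htau x y v z hnonneg hode
end

section
/- Let f(ζ) = ζ⁴ + (1997/600)ζ³ + (121/120)ζ² + (401/5000)ζ + 1/2000 - (5/8)e^{-10ζ}ζ² - (1/16)e^{-10ζ}ζ for real ζ ≥ 0. Then f(0) = 1/2000 > 0 and f(ζ) > 0 for all ζ ≥ 0; in particular f has no nonnegative real root. -/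
lemma quartic_sub_damped_pos {z e : ℝ} (hz : 0 ≤ z) (he : e ≤ 1) :
    0 < z ^ 4 + (1997 / 600) * z ^ 3 + (121 / 120) * z ^ 2 + (401 / 5000) * z + 1 / 2000 -
      (5 / 8) * e * z ^ 2 - (1 / 16) * e * z := by
  -- Setting `e = 1` leaves a polynomial with positive coefficients: `23/60 = 121/120 - 5/8` and
  -- `177/10000 = 401/5000 - 1/16`.
  have hsplit : z ^ 4 + (1997 / 600) * z ^ 3 + (121 / 120) * z ^ 2 + (401 / 5000) * z + 1 / 2000 -
      (5 / 8) * e * z ^ 2 - (1 / 16) * e * z =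
      (z ^ 4 + (1997 / 600) * z ^ 3 + (23 / 60) * z ^ 2 + (177 / 10000) * z + 1 / 2000) +
        (1 - e) * ((5 / 8) * z ^ 2 + (1 / 16) * z) := by ring
  rw [hsplit]
  exact add_pos_of_pos_of_nonneg (by positivity) (mul_nonneg (by linarith) (by positivity))

theorem f_no_nonneg_root :
    let f : ℝ → ℝ := fun z => z ^ 4 + (1997 / 600) * z ^ 3 + (121 / 120) * z ^ 2 +
      (401 / 5000) * z + 1 / 2000 - (5 / 8) * Real.exp (-10 * z) * z ^ 2 -
      (1 / 16) * Real.exp (-10 * z) * z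
    f 0 = 1 / 2000 ∧ (0:ℝ) < 1 / 2000 ∧ (∀ z : ℝ, 0 ≤ z → 0 < f z) ∧
    ¬ ∃ z : ℝ, 0 ≤ z ∧ f z = 0 := by
  intro f
  have hpos : ∀ z : ℝ, 0 ≤ z → 0 < f z := fun z hz =>
    quartic_sub_damped_pos hz (Real.exp_le_one_iff.mpr (by linarith))
  exact ⟨by simp [f], by norm_num, hpos, fun ⟨z, hz, hfz⟩ => (hpos z hz).ne' hfz⟩
end
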